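/- arXiv:1310.2599 — 4 statements merged into one kernel-verified Lean document; each statement's English description precedes it below -/
import Mathlib

section
/- Let L be the Kolmogorov operator Lφ(q,p) = ⟨p, ∂_q φ⟩ - ⟨∇V(q) + γp, ∂_p φ⟩ + (σ²/2)Δ_p φ on ℝ^{2d}, with V satisfying assumption B-2 (with constants β ∈ (0,1), γ, κ > 0) and V ≥ 0. Let Γ(q,p) = (1/2)|p|² + V(q) + (γ/2)⟨q,p⟩ + (γ²/4)|q|² + 1. Then LΓ(q,p) = -(γ/2)|p|² - (γ/2)⟨q, ∇V(q)⟩ + dσ²/2, and consequently LΓ(q,p) ≤ dσ²/2 + (κ+β)γ - βγ Γ(q,p) for all (q,p). -/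
open scoped RealInnerProductSpace BigOperators

noncomputable section

section helpers
variable {F : Type*} [NormedAddCommGroup F] [InnerProductSpace ℝ F] [CompleteSpace F]

lemma myHG.add {f g : F → ℝ} {f' g' x : F} (hf : HasGradientAt f f' x)
    (hg : HasGradientAt g g' x) : HasGradientAt (fun y => f y + g y) (f' + g') x := by
  rw [hasGradientAt_iff_hasFDerivAt] at *
  rw [map_add]
  exact hf.add hg

lemma myHG.const_mul {f : F → ℝ} {f' x : F} (c : ℝ) (hf : HasGradientAt f f' x) :
    HasGradientAt (fun y => c * f y) (c • f') x := by
  rw [hasGradientAt_iff_hasFDerivAt] at *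
  simpa [map_smul] using hf.const_mul c

lemma myHG.inner_right (v x : F) : HasGradientAt (fun y => ⟪y, v⟫) v x := by
  rw [hasGradientAt_iff_hasFDerivAt]
  have h : (fun y : F => ⟪y, v⟫) = fun y => (InnerProductSpace.toDual ℝ F v) y := by
    funext y; simp [InnerProductSpace.toDual_apply_apply, real_inner_comm]
  rw [h]
  exact (InnerProductSpace.toDual ℝ F v).hasFDerivAt

lemma myHG.inner_left (v x : F) : HasGradientAt (fun y => ⟪v, y⟫) v x := by
  have := myHG.inner_right v x
  simpa [real_inner_comm] using this

lemma myHG.norm_sq (x : F) : HasGradientAt (fun y : F => ‖y‖ ^ 2) ((2:ℝ) • x) x := by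
  rw [hasGradientAt_iff_hasFDerivAt]
  have h := (hasFDerivAt_id x).norm_sq
  refine h.congr_fderiv ?_
  ext y
  simp [InnerProductSpace.toDual_apply_apply, real_inner_smul_left, two_smul, real_inner_comm]

lemma myHG.const (x : F) (c : ℝ) : HasGradientAt (fun _ : F => c) 0 x := hasGradientAt_const x c

end helpers

/-- Gradient in the `q` variable of a function on `ℝ^d × ℝ^d`. -/
noncomputable def gradQ {d : ℕ} (φ : EuclideanSpace ℝ (Fin d) × EuclideanSpace ℝ (Fin d) → ℝ)
    (q p : EuclideanSpace ℝ (Fin d)) : EuclideanSpace ℝ (Fin d) :=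
  gradient (fun y => φ (y, p)) q

/-- Gradient in the `p` variable. -/
noncomputable def gradP {d : ℕ} (φ : EuclideanSpace ℝ (Fin d) × EuclideanSpace ℝ (Fin d) → ℝ)
    (q p : EuclideanSpace ℝ (Fin d)) : EuclideanSpace ℝ (Fin d) :=
  gradient (fun y => φ (q, y)) p

/-- Laplacian in the `p` variables: `Σᵢ ∂²φ/∂pᵢ²`. -/
noncomputable def lapP {d : ℕ} (φ : EuclideanSpace ℝ (Fin d) × EuclideanSpace ℝ (Fin d) → ℝ)
    (q p : EuclideanSpace ℝ (Fin d)) : ℝ :=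
  ∑ i : Fin d,
    fderiv ℝ (fun y => fderiv ℝ (fun z => φ (q, z)) y (EuclideanSpace.single i 1)) p
      (EuclideanSpace.single i 1)

/-- The Kolmogorov (generator) operator of the Langevin equation:
`Lφ(q,p) = ⟨p, ∂_q φ⟩ - ⟨∇V(q) + γp, ∂_p φ⟩ + (σ²/2) Σᵢ ∂²φ/∂pᵢ²`. -/
noncomputable def Kolm {d : ℕ} (V : EuclideanSpace ℝ (Fin d) → ℝ) (γ σ : ℝ)
    (φ : EuclideanSpace ℝ (Fin d) × EuclideanSpace ℝ (Fin d) → ℝ)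
    (q p : EuclideanSpace ℝ (Fin d)) : ℝ :=
  ⟪p, gradQ φ q p⟫ - ⟪gradient V q + γ • p, gradP φ q p⟫ + σ ^ 2 / 2 * lapP φ q p

set_option maxHeartbeats 1000000 in
theorem kolmogorov_on_lyapunov {d : ℕ} (V : EuclideanSpace ℝ (Fin d) → ℝ)
    (γ σ κ β : ℝ) (hV : ContDiff ℝ (⊤ : ℕ∞) V) (hVpos : ∀ q, 0 ≤ V q)
    (hγ : 0 < γ) (hσ : 0 < σ) (hκ : 0 < κ) (hβ : 0 < β) (hβ1 : β < 1)
    (hB2 : ∀ q, β * V q + γ ^ 2 * (β * (2 - β) / (8 * (1 - β))) * ‖q‖ ^ 2 - κ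
      ≤ (1 / 2) * ⟪gradient V q, q⟫)
    (Γ : EuclideanSpace ℝ (Fin d) × EuclideanSpace ℝ (Fin d) → ℝ)
    (hΓ : ∀ q p, Γ (q, p) = (1 / 2) * ‖p‖ ^ 2 + V q + (γ / 2) * ⟪q, p⟫
      + (γ ^ 2 / 4) * ‖q‖ ^ 2 + 1) :
    ∀ q p, Kolm V γ σ Γ q p
        = -(γ / 2) * ‖p‖ ^ 2 - (γ / 2) * ⟪q, gradient V q⟫ + d * σ ^ 2 / 2 ∧
      Kolm V γ σ Γ q p ≤ d * σ ^ 2 / 2 + (κ + β) * γ - β * γ * Γ (q, p) := by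
  intro q p
  -- gradient in q
  have hQ : HasGradientAt (fun y => Γ (y, p))
      (0 + gradient V q + (γ / 2) • p + (γ ^ 2 / 4) • ((2:ℝ) • q) + 0) q := by
    have h1 : (fun y => Γ (y, p)) = fun y =>
        (1 / 2) * ‖p‖ ^ 2 + V y + (γ / 2) * ⟪y, p⟫ + (γ ^ 2 / 4) * ‖y‖ ^ 2 + 1 :=
      funext fun y => hΓ y p
    rw [h1]
    exact myHG.add (myHG.add (myHG.add (myHG.add (myHG.const q _)
      (hV.differentiable (by simp) q).hasGradientAt)
      (myHG.const_mul _ (myHG.inner_right p q)))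
      (myHG.const_mul _ (myHG.norm_sq q))) (myHG.const q 1)
  have hgradQ : gradQ Γ q p = gradient V q + ((γ / 2) • p + (γ ^ 2 / 2) • q) := by
    unfold gradQ
    rw [hQ.gradient]
    module
  -- gradient in p, at an arbitrary point
  have hPy : ∀ y, HasGradientAt (fun z => Γ (q, z))
      ((1 / 2 : ℝ) • ((2:ℝ) • y) + 0 + (γ / 2) • q + 0 + 0) y := by
    intro y
    have h1 : (fun z => Γ (q, z)) = fun z =>
        (1 / 2) * ‖z‖ ^ 2 + V q + (γ / 2) * ⟪q, z⟫ + (γ ^ 2 / 4) * ‖q‖ ^ 2 + 1 :=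
      funext fun z => hΓ q z
    rw [h1]
    exact myHG.add (myHG.add (myHG.add (myHG.add (myHG.const_mul _ (myHG.norm_sq y))
      (myHG.const y (V q))) (myHG.const_mul _ (myHG.inner_left q y)))
      (myHG.const y _)) (myHG.const y 1)
  have hgradP : gradP Γ q p = p + (γ / 2) • q := by
    unfold gradP
    rw [(hPy p).gradient]
    module
  -- laplacian in p
  have hfderiv : ∀ y, fderiv ℝ (fun z => Γ (q, z)) y
      = (InnerProductSpace.toDual ℝ (EuclideanSpace ℝ (Fin d)))
          ((1 / 2 : ℝ) • ((2:ℝ) • y) + 0 + (γ / 2) • q + 0 + 0) := fun y =>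
    (hasGradientAt_iff_hasFDerivAt.mp (hPy y)).fderiv
  have hlap : lapP Γ q p = d := by
    unfold lapP
    have hterm : ∀ i : Fin d, fderiv ℝ
        (fun y => fderiv ℝ (fun z => Γ (q, z)) y (EuclideanSpace.single i 1)) p
        (EuclideanSpace.single i 1) = 1 := by
      intro i
      have h2 : (fun y => fderiv ℝ (fun z => Γ (q, z)) y (EuclideanSpace.single i 1))
          = fun y => ⟪y, EuclideanSpace.single i 1⟫
            + ⟪(γ / 2) • q, (EuclideanSpace.single i 1 : EuclideanSpace ℝ (Fin d))⟫ := by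
        funext y
        rw [hfderiv y, InnerProductSpace.toDual_apply_apply]
        simp [inner_add_left, real_inner_smul_left, two_smul]
        ring
      rw [h2]
      have hg : HasGradientAt (fun y : EuclideanSpace ℝ (Fin d) =>
          ⟪y, EuclideanSpace.single i 1⟫
            + ⟪(γ / 2) • q, (EuclideanSpace.single i 1 : EuclideanSpace ℝ (Fin d))⟫)
          (EuclideanSpace.single i 1 + 0) p :=
        myHG.add (myHG.inner_right _ p) (myHG.const p _)
      rw [(hasGradientAt_iff_hasFDerivAt.mp hg).fderiv, InnerProductSpace.toDual_apply_apply]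
      simp [EuclideanSpace.inner_single_left, EuclideanSpace.single_apply]
    rw [Finset.sum_congr rfl (fun i _ => hterm i)]
    simp
  -- the equality
  have heq : Kolm V γ σ Γ q p
      = -(γ / 2) * ‖p‖ ^ 2 - (γ / 2) * ⟪q, gradient V q⟫ + d * σ ^ 2 / 2 := by
    unfold Kolm
    rw [hgradQ, hgradP, hlap]
    simp only [inner_add_left, inner_add_right, real_inner_smul_left, real_inner_smul_right,
      real_inner_self_eq_norm_sq]
    linear_combination real_inner_comm (gradient V q) p
      + (γ / 2) * real_inner_comm (gradient V q) q
  refine ⟨heq, ?_⟩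
  rw [heq, hΓ q p]
  have hb := hB2 q
  have hVq := hVpos q
  have h1β : (0:ℝ) < 1 - β := by linarith
  set A := γ ^ 2 * (β * (2 - β) / (8 * (1 - β))) with hAdef
  have hA : A * (8 * (1 - β)) = γ ^ 2 * β * (2 - β) := by
    rw [hAdef]; field_simp
  have hAq : A * (8 * (1 - β)) * (γ * ‖q‖ ^ 2) = γ ^ 2 * β * (2 - β) * (γ * ‖q‖ ^ 2) := by
    rw [hA]
  have hbγ : γ * (β * V q + A * ‖q‖ ^ 2 - κ) ≤ γ * ((1 / 2) * ⟪gradient V q, q⟫) :=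
    mul_le_mul_of_nonneg_left hb hγ.le
  have hcomm : ⟪q, gradient V q⟫ = ⟪gradient V q, q⟫ := real_inner_comm _ _
  have hip : ⟪q, p⟫ ≤ ‖q‖ * ‖p‖ := real_inner_le_norm q p
  have h8 : (0:ℝ) < 8 * (1 - β) := by linarith
  have key : (0:ℝ) ≤ 4 * γ * (1 - β) ^ 2 * ‖p‖ ^ 2 - 4 * β * γ ^ 2 * (1 - β) * ⟪q, p⟫
      + β ^ 2 * γ ^ 3 * ‖q‖ ^ 2 := by
    nlinarith [sq_nonneg (2 * (1 - β) * ‖p‖ - β * γ * ‖q‖),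
      mul_nonneg (mul_nonneg (mul_nonneg hβ.le hγ.le) h1β.le) (sub_nonneg.2 hip), hγ,
      mul_pos (mul_pos hβ hγ) h1β]
  have final : (0:ℝ) ≤ γ * (1 - β) / 2 * ‖p‖ ^ 2 - β * γ ^ 2 / 2 * ⟪q, p⟫
      + β ^ 2 * γ ^ 3 / (8 * (1 - β)) * ‖q‖ ^ 2 := by
    have heqd : γ * (1 - β) / 2 * ‖p‖ ^ 2 - β * γ ^ 2 / 2 * ⟪q, p⟫
        + β ^ 2 * γ ^ 3 / (8 * (1 - β)) * ‖q‖ ^ 2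
        = (4 * γ * (1 - β) ^ 2 * ‖p‖ ^ 2 - 4 * β * γ ^ 2 * (1 - β) * ⟪q, p⟫
          + β ^ 2 * γ ^ 3 * ‖q‖ ^ 2) / (8 * (1 - β)) := by
      field_simp
      ring
    rw [heqd]
    exact div_nonneg key h8.le
  have hAc : γ * (A - β * γ ^ 2 / 4) = β ^ 2 * γ ^ 3 / (8 * (1 - β)) := by
    rw [hAdef]
    field_simp
    ring
  have hAcq : γ * (A - β * γ ^ 2 / 4) * ‖q‖ ^ 2 = β ^ 2 * γ ^ 3 / (8 * (1 - β)) * ‖q‖ ^ 2 := by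
    rw [hAc]
  nlinarith [hbγ, final, hAcq, hcomm]
end
end

section
/- Let V : ℝ^d → ℝ be smooth with D²V(q)(h,h) ≥ -θ|h|² for all q, h (semi-convexity with constant θ ≥ 0), and suppose ⟨q, ∇V(q)⟩ ≥ β₁|q|² - κ for some β₁ > 0, κ > 0. Fix γ > 0 and δ with 0 < δ < (γ + √(γ² + 4θ))/(2θ). Then for each (q,p) ∈ ℝ^{2d} there exists a unique z ∈ ℝ^d satisfying z = q + (δ/(1+γδ))(p - δ∇V(z)). -/
open scoped RealInnerProductSpace

section ImplicitStepAux

variable {d : ℕ}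

private lemma line_hasDerivAt (V : EuclideanSpace ℝ (Fin d) → ℝ) (hV : ContDiff ℝ (⊤ : ℕ∞) V)
    (x v : EuclideanSpace ℝ (Fin d)) (t : ℝ) :
    HasDerivAt (fun s : ℝ => V (x + s • v)) ((fderiv ℝ V (x + t • v)) v) t := by
  have hL : HasDerivAt (fun s : ℝ => x + s • v) v t := by
    simpa using ((hasDerivAt_id t).smul_const v).const_add x
  exact (hV.differentiable (by simp) (x + t • v)).hasFDerivAt.comp_hasDerivAt t hL

private lemma line_hasDerivAt2 (V : EuclideanSpace ℝ (Fin d) → ℝ) (hV : ContDiff ℝ (⊤ : ℕ∞) V)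
    (x v : EuclideanSpace ℝ (Fin d)) (t : ℝ) :
    HasDerivAt (fun s : ℝ => (fderiv ℝ V (x + s • v)) v)
      ((fderiv ℝ (fderiv ℝ V) (x + t • v)) v v) t := by
  have hL : HasDerivAt (fun s : ℝ => x + s • v) v t := by
    simpa using ((hasDerivAt_id t).smul_const v).const_add x
  have hF : ContDiff ℝ (⊤ : ℕ∞) (fderiv ℝ V) := hV.fderiv_right (by simp)
  have h1 : HasDerivAt (fun s : ℝ => fderiv ℝ V (x + s • v))
      ((fderiv ℝ (fderiv ℝ V) (x + t • v)) v) t :=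
    (hF.differentiable (by simp) (x + t • v)).hasFDerivAt.comp_hasDerivAt t hL
  simpa using h1.clm_apply (hasDerivAt_const t v)

private lemma grad_inner (V : EuclideanSpace ℝ (Fin d) → ℝ) (x v : EuclideanSpace ℝ (Fin d)) :
    ⟪gradient V x, v⟫ = fderiv ℝ V x v :=
  InnerProductSpace.toDual_symm_apply

private lemma G_line_hasDerivAt (V : EuclideanSpace ℝ (Fin d) → ℝ) (hV : ContDiff ℝ (⊤ : ℕ∞) V)
    (lam : ℝ) (a x v : EuclideanSpace ℝ (Fin d)) (t : ℝ) :
    HasDerivAt (fun s : ℝ => (1/2) * ‖x + s • v - a‖ ^ 2 + lam * V (x + s • v))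
      ((⟪x - a, v⟫ + t * ‖v‖ ^ 2) + lam * ((fderiv ℝ V (x + t • v)) v)) t := by
  have key : ∀ s : ℝ, (1/2) * ‖x + s • v - a‖ ^ 2
      = (1/2) * ‖x - a‖ ^ 2 + s * ⟪x - a, v⟫ + s ^ 2 * (‖v‖ ^ 2 / 2) := by
    intro s
    have h1 : x + s • v - a = (x - a) + s • v := by abel
    have h2 : ‖s • v‖ ^ 2 = s ^ 2 * ‖v‖ ^ 2 := by
      rw [norm_smul, mul_pow, Real.norm_eq_abs, sq_abs]
    rw [h1, norm_add_sq_real, real_inner_smul_right, h2]; ring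
  have hp : HasDerivAt
      (fun s : ℝ => (1/2) * ‖x - a‖ ^ 2 + s * ⟪x - a, v⟫ + s ^ 2 * (‖v‖ ^ 2 / 2))
      (⟪x - a, v⟫ + t * ‖v‖ ^ 2) t := by
    have ha := (((hasDerivAt_id t).mul_const ⟪x - a, v⟫).const_add ((1/2) * ‖x - a‖ ^ 2)).add
      ((hasDerivAt_pow 2 t).mul_const (‖v‖ ^ 2 / 2))
    exact ha.congr_deriv (by norm_num; ring)
  have hq : HasDerivAt (fun s : ℝ => (1/2) * ‖x + s • v - a‖ ^ 2)
      (⟪x - a, v⟫ + t * ‖v‖ ^ 2) t :=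
    hp.congr_of_eventuallyEq (Filter.Eventually.of_forall fun s => key s)
  exact hq.add ((line_hasDerivAt V hV x v t).const_mul lam)

private lemma strong_ineq (V : EuclideanSpace ℝ (Fin d) → ℝ) (hV : ContDiff ℝ (⊤ : ℕ∞) V)
    (θ lam : ℝ) (hlam : 0 ≤ lam)
    (hsemi : ∀ x h, -θ * ‖h‖ ^ 2 ≤ fderiv ℝ (fderiv ℝ V) x h h)
    (a x v : EuclideanSpace ℝ (Fin d)) :
    (1/2) * ‖x - a‖ ^ 2 + lam * V x + ⟪x - a + lam • gradient V x, v⟫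
        + ((1 - lam * θ)/2) * ‖v‖ ^ 2
      ≤ (1/2) * ‖x + v - a‖ ^ 2 + lam * V (x + v) := by
  set m : ℝ := 1 - lam * θ with hm
  set g' : ℝ → ℝ := fun t => (⟪x - a, v⟫ + t * ‖v‖ ^ 2) + lam * ((fderiv ℝ V (x + t • v)) v)
    with hg'def
  set φ : ℝ → ℝ := fun t => g' t - g' 0 - m * ‖v‖ ^ 2 * t with hφdef
  have hφderiv : ∀ t : ℝ, HasDerivAt φ
      ((‖v‖ ^ 2 + lam * ((fderiv ℝ (fderiv ℝ V) (x + t • v)) v v)) - m * ‖v‖ ^ 2) t := by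
    intro t
    have h1 : HasDerivAt (fun s : ℝ => ⟪x - a, v⟫ + s * ‖v‖ ^ 2) (‖v‖ ^ 2) t := by
      simpa using ((hasDerivAt_id t).mul_const (‖v‖ ^ 2)).const_add ⟪x - a, v⟫
    have h2 : HasDerivAt g'
        (‖v‖ ^ 2 + lam * ((fderiv ℝ (fderiv ℝ V) (x + t • v)) v v)) t :=
      h1.add ((line_hasDerivAt2 V hV x v t).const_mul lam)
    have h3 : HasDerivAt (fun s : ℝ => m * ‖v‖ ^ 2 * s) (m * ‖v‖ ^ 2) t := by
      simpa using (hasDerivAt_id t).const_mul (m * ‖v‖ ^ 2)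
    exact (h2.sub_const (g' 0)).sub h3
  have hφmono : Monotone φ := by
    apply monotone_of_deriv_nonneg (fun t => (hφderiv t).differentiableAt)
    intro t
    rw [(hφderiv t).deriv]
    have h := hsemi (x + t • v) v
    nlinarith [mul_le_mul_of_nonneg_left h hlam]
  have hφnonneg : ∀ t, 0 ≤ t → 0 ≤ φ t := by
    intro t ht
    have : φ 0 ≤ φ t := hφmono ht
    simpa [hφdef] using this
  set g : ℝ → ℝ := fun s => (1/2) * ‖x + s • v - a‖ ^ 2 + lam * V (x + s • v) with hgdef
  set ψ : ℝ → ℝ := fun t => g t - t * g' 0 - m * ‖v‖ ^ 2 * t ^ 2 / 2 with hψdef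
  have hψderiv : ∀ t : ℝ, HasDerivAt ψ (φ t) t := by
    intro t
    have h1 : HasDerivAt g (g' t) t := G_line_hasDerivAt V hV lam a x v t
    have h2 : HasDerivAt (fun s : ℝ => s * g' 0) (g' 0) t := by
      simpa using (hasDerivAt_id t).mul_const (g' 0)
    have h3 : HasDerivAt (fun s : ℝ => m * ‖v‖ ^ 2 * s ^ 2 / 2) (m * ‖v‖ ^ 2 * t) t := by
      have := ((hasDerivAt_pow 2 t).const_mul (m * ‖v‖ ^ 2)).div_const 2
      exact this.congr_deriv (by norm_num; ring)
    have := (h1.sub h2).sub h3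
    exact this
  have hψmono : MonotoneOn ψ (Set.Ici (0:ℝ)) := by
    apply monotoneOn_of_deriv_nonneg (convex_Ici 0)
      (Continuous.continuousOn (by
        have : Differentiable ℝ ψ := fun t => (hψderiv t).differentiableAt
        exact this.continuous))
      (fun t _ => (hψderiv t).differentiableAt.differentiableWithinAt)
    intro t ht
    rw [interior_Ici] at ht
    rw [(hψderiv t).deriv]
    exact hφnonneg t (le_of_lt ht)
  have h01 : ψ 0 ≤ ψ 1 := hψmono (by norm_num) (by norm_num) (by norm_num)
  have hginner : g' 0 = ⟪x - a + lam • gradient V x, v⟫ := by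
    rw [inner_add_left, real_inner_smul_left, grad_inner]
    simp [hg'def]
  have hg0 : g 0 = (1/2) * ‖x - a‖ ^ 2 + lam * V x := by simp [hgdef]
  have hg1 : g 1 = (1/2) * ‖x + v - a‖ ^ 2 + lam * V (x + v) := by simp [hgdef]
  have := h01
  rw [hψdef] at this
  simp only [hg0, hg1] at this ⊢
  rw [← hginner]
  nlinarith [this]

end ImplicitStepAux

set_option maxHeartbeats 1000000 in
theorem implicit_step_exists_unique {d : ℕ} (V : EuclideanSpace ℝ (Fin d) → ℝ)
    (θ β₁ κ γ δ : ℝ) (hV : ContDiff ℝ (⊤ : ℕ∞) V)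
    (hθ : 0 < θ) (hβ₁ : 0 < β₁) (hκ : 0 < κ) (hγ : 0 < γ)
    (hsemi : ∀ x h, -θ * ‖h‖ ^ 2 ≤ fderiv ℝ (fderiv ℝ V) x h h)
    (hdiss : ∀ q, β₁ * ‖q‖ ^ 2 - κ ≤ ⟪q, gradient V q⟫)
    (hδ : 0 < δ) (hδ' : δ < (γ + Real.sqrt (γ ^ 2 + 4 * θ)) / (2 * θ)) :
    ∀ q p : EuclideanSpace ℝ (Fin d),
      ∃! z : EuclideanSpace ℝ (Fin d),
        z = q + (δ / (1 + γ * δ)) • (p - δ • gradient V z) := by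
  intro q p
  have h1γδ : (0:ℝ) < 1 + γ * δ := by positivity
  obtain ⟨c, hc⟩ : ∃ c : ℝ, c = δ / (1 + γ * δ) := ⟨_, rfl⟩
  obtain ⟨lam, hlamdef⟩ : ∃ lam : ℝ, lam = c * δ := ⟨_, rfl⟩
  have hlam0 : 0 < lam := by rw [hlamdef, hc]; positivity
  have hθδ : θ * δ ^ 2 < 1 + γ * δ := by
    set s : ℝ := Real.sqrt (γ ^ 2 + 4 * θ) with hs
    have hs2 : s ^ 2 = γ ^ 2 + 4 * θ := Real.sq_sqrt (by positivity)
    have hs0 : 0 ≤ s := Real.sqrt_nonneg _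
    have hsγ : γ < s := by nlinarith
    have hA : 2 * θ * δ - γ < s := by
      have := (lt_div_iff₀ (by positivity : (0:ℝ) < 2 * θ)).mp hδ'
      linarith
    have hB : 0 < s + (2 * θ * δ - γ) := by nlinarith [mul_pos hθ hδ]
    nlinarith [mul_pos (sub_pos.mpr hA) hB]
  obtain ⟨m, hmdef⟩ : ∃ m : ℝ, m = 1 - lam * θ := ⟨_, rfl⟩
  have hm : 0 < m := by
    have : lam * θ < 1 := by
      rw [hlamdef, hc, div_mul_eq_mul_div, div_mul_eq_mul_div, div_lt_one h1γδ]
      nlinarith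
    rw [hmdef]; linarith
  obtain ⟨a, ha⟩ : ∃ a : EuclideanSpace ℝ (Fin d), a = q + c • p := ⟨_, rfl⟩
  have hequiv : ∀ z : EuclideanSpace ℝ (Fin d),
      (z = q + c • (p - δ • gradient V z)) ↔ (z - a + lam • gradient V z = 0) := by
    intro z
    have h1 : q + c • (p - δ • gradient V z) = a - lam • gradient V z := by
      rw [ha, hlamdef]; rw [smul_sub, smul_smul]; abel
    rw [h1, ← sub_eq_zero,
      show z - (a - lam • gradient V z) = z - a + lam • gradient V z from by abel]
  obtain ⟨G, hG⟩ : ∃ G : EuclideanSpace ℝ (Fin d) → ℝ,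
      G = fun z => (1/2) * ‖z - a‖ ^ 2 + lam * V z := ⟨_, rfl⟩
  have hGcont : Continuous G := by
    rw [hG]
    exact (continuous_const.mul ((continuous_id.sub continuous_const).norm.pow 2)).add
      (continuous_const.mul hV.continuous)
  have key : ∀ x v : EuclideanSpace ℝ (Fin d),
      G x + ⟪x - a + lam • gradient V x, v⟫ + (m/2) * ‖v‖ ^ 2 ≤ G (x + v) := by
    intro x v
    have h := strong_ineq V hV θ lam hlam0.le hsemi a x v
    simp only [hG, hmdef]
    exact h
  obtain ⟨u, hu⟩ : ∃ u : EuclideanSpace ℝ (Fin d),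
      u = (0 : EuclideanSpace ℝ (Fin d)) - a + lam • gradient V 0 := ⟨_, rfl⟩
  obtain ⟨R, hR⟩ : ∃ R : ℝ, R = 2 * ‖u‖ / m + 1 := ⟨_, rfl⟩
  have hR0 : 0 ≤ R := by
    have h2 : 0 ≤ 2 * ‖u‖ / m := div_nonneg (by positivity) hm.le
    rw [hR]; linarith
  obtain ⟨z₀, hz₀mem, hz₀⟩ := (isCompact_closedBall (0:EuclideanSpace ℝ (Fin d)) R).exists_isMinOn
    ⟨0, Metric.mem_closedBall_self hR0⟩ hGcont.continuousOn
  have hglob : ∀ z, G z₀ ≤ G z := by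
    intro z
    by_cases hz : z ∈ Metric.closedBall (0:EuclideanSpace ℝ (Fin d)) R
    · exact hz₀ hz
    · have hz' : R < ‖z‖ := by
        simpa [Metric.mem_closedBall, dist_zero_right, not_le] using hz
      have h0 : G z₀ ≤ G 0 := hz₀ (Metric.mem_closedBall_self hR0)
      have hk := key 0 z
      rw [zero_add, ← hu] at hk
      have hinner : -(‖u‖ * ‖z‖) ≤ ⟪u, z⟫ :=
        neg_le_of_neg_le (by simpa using (neg_le_abs _).trans (abs_real_inner_le_norm u z))
      have hz0 : 0 < ‖z‖ := lt_of_le_of_lt hR0 hz'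
      have hRz : m * R < m * ‖z‖ := (mul_lt_mul_iff_right₀ hm).mpr hz'
      have hmR : m * R = 2 * ‖u‖ + m := by rw [hR]; field_simp
      have hmul : (2 * ‖u‖ + m) * ‖z‖ < m * ‖z‖ * ‖z‖ := by
        rw [← hmR]; exact mul_lt_mul_of_pos_right hRz hz0
      nlinarith [norm_nonneg u, mul_pos hm hz0, hmul, hinner, hk, h0]
  have hcrit : z₀ - a + lam • gradient V z₀ = 0 := by
    have hall : ∀ v : EuclideanSpace ℝ (Fin d), ⟪z₀ - a + lam • gradient V z₀, v⟫ = 0 := by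
      intro v
      have hloc : IsLocalMin
          (fun t : ℝ => (1/2) * ‖z₀ + t • v - a‖ ^ 2 + lam * V (z₀ + t • v)) 0 :=
        Filter.Eventually.of_forall fun t => by
          have := hglob (z₀ + t • v)
          rw [hG] at this
          simpa using this
      have hd := G_line_hasDerivAt V hV lam a z₀ v 0
      have hdz : deriv
          (fun t : ℝ => (1/2) * ‖z₀ + t • v - a‖ ^ 2 + lam * V (z₀ + t • v)) 0 = 0 :=
        hloc.deriv_eq_zero
      have heq := hd.deriv
      rw [hdz] at heq
      simp only [zero_smul, add_zero, zero_mul] at heq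
      rw [inner_add_left, real_inner_smul_left, grad_inner]
      linarith [heq]
    exact inner_self_eq_zero.mp (hall (z₀ - a + lam • gradient V z₀))
  simp only [← hc]
  refine ⟨z₀, (hequiv z₀).mpr hcrit, ?_⟩
  intro y hy
  have hy' : y - a + lam • gradient V y = 0 := (hequiv y).mp hy
  have k1 := key z₀ (y - z₀)
  have k2 := key y (z₀ - y)
  rw [hcrit, inner_zero_left, add_sub_cancel] at k1
  rw [hy', inner_zero_left, add_sub_cancel] at k2
  rw [norm_sub_rev z₀ y] at k2
  have hsq : ‖y - z₀‖ ^ 2 ≤ 0 := by nlinarith [k1, k2, hm]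
  have h0 : y - z₀ = 0 := by
    have := le_antisymm hsq (by positivity)
    simpa [pow_eq_zero_iff] using this
  exact sub_eq_zero.mp h0
end

section
/- Let V : ℝ^d → ℝ be smooth with Hessian bounded below by -θ·Id and dissipative: ⟨z, ∇V(z)⟩ ≥ β₁|z|² - κ for β₁, κ > 0. Let 0 < δ ≤ δ₀ and γ > 0, and let z = Ψ_δ(q,p) be the unique solution of (1+γδ)z = (1+γδ)q + δp - δ²∇V(z). Then there is a constant C > 0 independent of δ (depending on γ, β₁, κ, δ₀) such that |Ψ_δ(q,p)|² ≤ C(1 + |q|² + |p|²) for all (q,p) ∈ ℝ^{2d}. -/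
set_option maxHeartbeats 1000000


open scoped RealInnerProductSpace

theorem implicit_map_quadratic_growth {d : ℕ} (V : EuclideanSpace ℝ (Fin d) → ℝ)
    (θ β₁ κ γ δ₀ : ℝ) (hV : ContDiff ℝ (⊤ : ℕ∞) V)
    (hθ : 0 < θ) (hβ₁ : 0 < β₁) (hκ : 0 < κ) (hγ : 0 < γ) (hδ₀ : 0 < δ₀)
    (hδ₀' : δ₀ < (γ + Real.sqrt (γ ^ 2 + 4 * θ)) / (2 * θ))
    (hsemi : ∀ x h, -θ * ‖h‖ ^ 2 ≤ fderiv ℝ (fderiv ℝ V) x h h)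
    (hdiss : ∀ z, β₁ * ‖z‖ ^ 2 - κ ≤ ⟪z, gradient V z⟫) :
    ∃ C : ℝ, 0 < C ∧ ∀ δ : ℝ, 0 < δ → δ ≤ δ₀ →
      ∀ q p z : EuclideanSpace ℝ (Fin d),
        (1 + γ * δ) • z = (1 + γ * δ) • q + δ • p - (δ ^ 2) • gradient V z →
        ‖z‖ ^ 2 ≤ C * (1 + ‖q‖ ^ 2 + ‖p‖ ^ 2) := by
  refine ⟨(1 + γ * δ₀) + 1 / β₁ + 2 * δ₀ ^ 2 * κ, by positivity, ?_⟩
  intro δ hδ hδδ q p z heq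
  have h1 : (1 + γ * δ) * ‖z‖ ^ 2 =
      (1 + γ * δ) * ⟪z, q⟫ + δ * ⟪z, p⟫ - δ ^ 2 * ⟪z, gradient V z⟫ := by
    have h := congrArg (fun w => (⟪z, w⟫ : ℝ)) heq
    simp only [inner_add_right, inner_sub_right, real_inner_smul_right,
      real_inner_self_eq_norm_sq] at h
    linarith [h]
  have hd := hdiss z
  have hq : ⟪z, q⟫ ≤ ‖z‖ * ‖q‖ := real_inner_le_norm z q
  have hp : ⟪z, p⟫ ≤ ‖z‖ * ‖p‖ := real_inner_le_norm z p
  have h2 : 2 * (‖z‖ * ‖q‖) ≤ ‖z‖ ^ 2 + ‖q‖ ^ 2 := by nlinarith [sq_nonneg (‖z‖ - ‖q‖)]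
  have h3 : 2 * β₁ * (δ * (‖z‖ * ‖p‖)) ≤ δ ^ 2 * β₁ ^ 2 * ‖z‖ ^ 2 + ‖p‖ ^ 2 := by
    nlinarith [sq_nonneg (δ * β₁ * ‖z‖ - ‖p‖)]
  have hγδ : 0 ≤ γ * δ := by positivity
  have hγδ₀ : 0 ≤ γ * δ₀ := by positivity
  have hzq : 0 ≤ ‖q‖ ^ 2 := sq_nonneg _
  have hzp : 0 ≤ ‖p‖ ^ 2 := sq_nonneg _
  have hzz : 0 ≤ ‖z‖ ^ 2 := sq_nonneg _
  have hδ2 : δ ^ 2 ≤ δ₀ ^ 2 := by nlinarith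
  have hpos1 : (0:ℝ) ≤ 2 * β₁ * (1 + γ * δ) := by positivity
  have hpos2 : (0:ℝ) ≤ β₁ * (1 + γ * δ) := by positivity
  have h1' : 2 * β₁ * ((1 + γ * δ) * ‖z‖ ^ 2) =
      2 * β₁ * (1 + γ * δ) * ⟪z, q⟫ + 2 * β₁ * δ * ⟪z, p⟫
        - 2 * β₁ * δ ^ 2 * ⟪z, gradient V z⟫ := by linear_combination (2 * β₁) * h1
  have hA : 2 * β₁ * (1 + γ * δ) * ⟪z, q⟫ ≤ β₁ * (1 + γ * δ) * (‖z‖ ^ 2 + ‖q‖ ^ 2) := by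
    calc 2 * β₁ * (1 + γ * δ) * ⟪z, q⟫
        ≤ 2 * β₁ * (1 + γ * δ) * (‖z‖ * ‖q‖) := by
          exact mul_le_mul_of_nonneg_left hq hpos1
      _ = β₁ * (1 + γ * δ) * (2 * (‖z‖ * ‖q‖)) := by ring
      _ ≤ β₁ * (1 + γ * δ) * (‖z‖ ^ 2 + ‖q‖ ^ 2) := mul_le_mul_of_nonneg_left h2 hpos2
  have hB : 2 * β₁ * δ * ⟪z, p⟫ ≤ δ ^ 2 * β₁ ^ 2 * ‖z‖ ^ 2 + ‖p‖ ^ 2 := by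
    calc 2 * β₁ * δ * ⟪z, p⟫ ≤ 2 * β₁ * δ * (‖z‖ * ‖p‖) := by
          exact mul_le_mul_of_nonneg_left hp (by positivity)
      _ = 2 * β₁ * (δ * (‖z‖ * ‖p‖)) := by ring
      _ ≤ δ ^ 2 * β₁ ^ 2 * ‖z‖ ^ 2 + ‖p‖ ^ 2 := h3
  have hC : 2 * β₁ * δ ^ 2 * (β₁ * ‖z‖ ^ 2 - κ) ≤ 2 * β₁ * δ ^ 2 * ⟪z, gradient V z⟫ :=
    mul_le_mul_of_nonneg_left hd (by positivity)
  -- keyβ': β₁(1+γδ)|z|² + β₁²δ²|z|² ≤ β₁(1+γδ)|q|² + |p|² + 2β₁δ²κ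
  have keyβ' : β₁ * (1 + γ * δ) * ‖z‖ ^ 2 + β₁ ^ 2 * δ ^ 2 * ‖z‖ ^ 2 ≤
      β₁ * (1 + γ * δ) * ‖q‖ ^ 2 + ‖p‖ ^ 2 + 2 * β₁ * δ ^ 2 * κ := by
    linarith [h1', hA, hB, hC]
  have e1 : 0 ≤ β₁ * (γ * δ) * ‖z‖ ^ 2 := by positivity
  have e2 : 0 ≤ β₁ ^ 2 * δ ^ 2 * ‖z‖ ^ 2 := by positivity
  have e3 : β₁ * (γ * δ) * ‖q‖ ^ 2 ≤ β₁ * (γ * δ₀) * ‖q‖ ^ 2 := by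
    have : γ * δ ≤ γ * δ₀ := by nlinarith
    nlinarith [mul_le_mul_of_nonneg_right this hzq]
  have e4 : 2 * β₁ * δ ^ 2 * κ ≤ 2 * β₁ * δ₀ ^ 2 * κ := by
    have := mul_le_mul_of_nonneg_left hδ2 (by positivity : (0:ℝ) ≤ 2 * β₁ * κ)
    linarith
  have keyβ : β₁ * ‖z‖ ^ 2 ≤ β₁ * (1 + γ * δ₀) * ‖q‖ ^ 2 + ‖p‖ ^ 2 + 2 * β₁ * δ₀ ^ 2 * κ := by
    linarith [keyβ', e1, e2, e3, e4]
  -- conclude, clearing the 1/β₁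
  set Q := ‖q‖ ^ 2; set P := ‖p‖ ^ 2
  have hS : (1:ℝ) ≤ 1 + Q + P := by simp only [Q, P]; nlinarith
  have hSnn : (0:ℝ) ≤ 1 + Q + P := by linarith
  have hexp : β₁ * (((1 + γ * δ₀) + 1 / β₁ + 2 * δ₀ ^ 2 * κ) * (1 + Q + P)) =
      β₁ * (1 + γ * δ₀) * (1 + Q + P) + (1 + Q + P) + 2 * β₁ * δ₀ ^ 2 * κ * (1 + Q + P) := by
    field_simp
  have t1 : β₁ * (1 + γ * δ₀) * Q ≤ β₁ * (1 + γ * δ₀) * (1 + Q + P) := by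
    apply mul_le_mul_of_nonneg_left _ (by positivity)
    simp only [Q, P]; nlinarith
  have t2 : P ≤ 1 + Q + P := by simp only [Q, P]; nlinarith
  have t3 : 2 * β₁ * δ₀ ^ 2 * κ ≤ 2 * β₁ * δ₀ ^ 2 * κ * (1 + Q + P) :=
    le_mul_of_one_le_right (by positivity) hS
  have hmul : β₁ * ‖z‖ ^ 2 ≤
      β₁ * (((1 + γ * δ₀) + 1 / β₁ + 2 * δ₀ ^ 2 * κ) * (1 + Q + P)) := by
    rw [hexp]; linarith
  exact (mul_le_mul_iff_right₀ hβ₁).mp hmul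
end

section
/- Let V : ℝ^d → ℝ be smooth satisfying assumptions B (semi-convexity with constant θ, the structural inequality B-2 with constants β ∈ (0,1), γ, κ, and V ≥ 0). Let 0 < δ < γβ/(4θ) and let Γ_δ(q,p) = Γ(q,p) + (γδ/4)|p|². If (q_{n+1}, p_{n+1}) satisfy the implicit Euler step q_{n+1} = q_n + δp_{n+1}, p_{n+1} + δ∇V(q_{n+1}) + γδ p_{n+1} = p_n + w (for some vector w ∈ ℝ^d), then for any ε ∈ (0,1) with δ < εγβ/(4θ): (1 + γ(1-ε)δβ) Γ_δ(q_{n+1}, p_{n+1}) ≤ Γ_δ(q_n, p_{n+1} + δγp_{n+1} + δ∇V(q_{n+1})) + γδ(κ+β). -/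
open scoped RealInnerProductSpace

section Helpers

lemma quad_form_nonneg (A B E a b s : ℝ) (hA : 0 ≤ A) (hB : 0 ≤ B)
    (hE : E^2 ≤ 4*A*B) (ha : 0 ≤ a) (hb : 0 ≤ b) (hCS : s^2 ≤ a*b) :
    E*s ≤ A*a + B*b := by
  have hT : 0 ≤ A*a + B*b := by positivity
  have h2 : (E*s)^2 ≤ (A*a+B*b)^2 := by
    have h3 : (E*s)^2 ≤ 4*A*B*(a*b) := by
      have := mul_nonneg hA hB
      nlinarith [sq_nonneg s, sq_nonneg E]
    nlinarith [sq_nonneg (A*a - B*b)]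
  nlinarith [h2, hT]

set_option maxHeartbeats 1000000 in
lemma core_ineq (a b s t u G Vq Vn θ γ κ β δ ε : ℝ)
    (ha : 0 ≤ a) (hb : 0 ≤ b) (hVq : 0 ≤ Vq)
    (hCS : s^2 ≤ a*b)
    (hsq : 0 ≤ G + 2*γ*t + γ^2*a)
    (hconv : Vq - Vn ≤ δ*t + θ*δ^2*a)
    (hB2 : β*Vq + γ^2*(β*(2-β)/(8*(1-β)))*b - κ ≤ u/2)
    (hθ : 0 < θ) (hγ : 0 < γ) (hδ : 0 < δ) (hβ : 0 < β) (hβ1 : β < 1)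
    (hε : 0 < ε) (hε1 : ε < 1) (hθδ : θ*δ ≤ ε*γ*β/4) :
    (1+γ*(1-ε)*δ*β) * ((1/2+γ*δ/4)*a + Vq + (γ/2)*s + (γ^2/4)*b + 1)
      ≤ (1/2+γ*δ/4)*((1+δ*γ)^2*a + 2*(1+δ*γ)*δ*t + δ^2*G) + Vn
        + (γ/2)*((1+δ*γ)*s + δ*u - δ*(1+δ*γ)*a - δ^2*t) + (γ^2/4)*(b - 2*δ*s + δ^2*a)
        + 1 + γ*δ*(κ+β) := by
  have h1β : (0:ℝ) < 1 - β := by linarith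
  have hT4 : (γ^2*(1-ε)*δ*β/2)*s ≤ (γ*δ*(1-β)/2)*a + (γ^3*δ*β^2/(8*(1-β)))*b := by
    apply quad_form_nonneg _ _ _ _ _ _ (by positivity) (by positivity) _ ha hb hCS
    have e : 4*(γ*δ*(1-β)/2)*(γ^3*δ*β^2/(8*(1-β))) = γ^4*δ^2*β^2/4 := by
      field_simp; ring
    rw [e]
    have h1 : (1-ε)^2 ≤ 1 := by nlinarith
    have h2 : (0:ℝ) ≤ γ^4*δ^2*β^2/4 := by positivity
    calc (γ^2*(1-ε)*δ*β/2)^2 = (1-ε)^2 * (γ^4*δ^2*β^2/4) := by ring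
      _ ≤ 1 * (γ^4*δ^2*β^2/4) := by nlinarith
      _ = γ^4*δ^2*β^2/4 := by ring
  have hB2' : γ*δ*(β*Vq + γ^2*(β*(2-β)/(8*(1-β)))*b - κ) ≤ γ*δ*(u/2) :=
    mul_le_mul_of_nonneg_left hB2 (by positivity)
  have hT24 : γ*δ*(β*Vq - κ) + (γ^3*δ*β/4)*b + (γ^2*(1-ε)*δ*β/2)*s
      ≤ γ*δ*(u/2) + (γ*δ*(1-β)/2)*a := by
    have e2 : γ*δ*(γ^2*(β*(2-β)/(8*(1-β))))*b = (γ^3*δ*β/4)*b + (γ^3*δ*β^2/(8*(1-β)))*b := by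
      field_simp; ring
    linarith [hB2', hT4, e2]
  have hT3 : 0 ≤ (1/2+γ*δ/4)*δ^2*(G + 2*γ*t + γ^2*a) := by
    apply mul_nonneg (by positivity) hsq
  have hRa : 0 ≤ (ε*γ*δ*β/2 + (γ^2*δ^2/4)*(1-(1-ε)*β) - θ*δ^2)*a := by
    apply mul_nonneg _ ha
    have h1 : θ*δ^2 ≤ (ε*γ*β/4)*δ := by nlinarith
    have h2 : 0 ≤ (γ^2*δ^2/4)*(1-(1-ε)*β) := by
      apply mul_nonneg (by positivity)
      nlinarith
    nlinarith
  have hRb : 0 ≤ (ε*γ^3*δ*β/4)*b := by positivity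
  have hRV : 0 ≤ ε*γ*δ*β*Vq := by positivity
  have hRc : 0 ≤ ε*γ*δ*β := by positivity
  linarith [hconv, hT24, hT3, hRa, hRb, hRV, hRc]

set_option maxHeartbeats 1000000 in
lemma semiconvex_taylor {d : ℕ} (V : EuclideanSpace ℝ (Fin d) → ℝ) (θ : ℝ) (hθ : 0 ≤ θ)
    (hV : ContDiff ℝ (⊤ : ℕ∞) V)
    (hsemi : ∀ x h, -θ * ‖h‖ ^ 2 ≤ fderiv ℝ (fderiv ℝ V) x h h)
    (x y : EuclideanSpace ℝ (Fin d)) :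
    V x - V y ≤ ⟪gradient V x, x - y⟫ + θ * ‖x - y‖ ^ 2 := by
  set h := y - x with hh
  have hdV : Differentiable ℝ V := hV.differentiable (by simp)
  have hdV2 : Differentiable ℝ (fderiv ℝ V) :=
    (hV.fderiv_right (m := 1) (by exact WithTop.coe_le_coe.mpr (le_top : ((1 + 1 : ℕ) : ℕ∞) ≤ ⊤))).differentiable one_ne_zero
  have hline : ∀ t : ℝ, HasDerivAt (fun t : ℝ => x + t • h) h t := by
    intro t
    simpa using ((hasDerivAt_id t).smul_const h).const_add x
  have hD : ∀ t : ℝ, HasDerivAt (fun t : ℝ => V (x + t • h))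
      (fderiv ℝ V (x + t • h) h) t := fun t =>
    ((hdV (x + t • h)).hasFDerivAt.comp_hasDerivAt t (hline t))
  have hD2 : ∀ t : ℝ, HasDerivAt (fun t : ℝ => fderiv ℝ V (x + t • h) h)
      (fderiv ℝ (fderiv ℝ V) (x + t • h) h h) t := by
    intro t
    have h1 : HasDerivAt (fun t : ℝ => fderiv ℝ V (x + t • h))
        (fderiv ℝ (fderiv ℝ V) (x + t • h) h) t :=
      (hdV2 (x + t • h)).hasFDerivAt.comp_hasDerivAt t (hline t)
    simpa using h1.clm_apply (hasDerivAt_const t h)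
  have hgD : ∀ t : ℝ, HasDerivAt (fun t : ℝ => fderiv ℝ V (x + t • h) h + θ * ‖h‖ ^ 2 * t)
      (fderiv ℝ (fderiv ℝ V) (x + t • h) h h + θ * ‖h‖ ^ 2) t := by
    intro t
    have h2 : HasDerivAt (fun t : ℝ => θ * ‖h‖ ^ 2 * t) (θ * ‖h‖ ^ 2) t := by
      simpa using (hasDerivAt_id t).const_mul (θ * ‖h‖ ^ 2)
    exact (hD2 t).add h2
  have hmono : Monotone (fun t : ℝ => fderiv ℝ V (x + t • h) h + θ * ‖h‖ ^ 2 * t) := by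
    apply monotone_of_deriv_nonneg
    · exact fun t => (hgD t).differentiableAt
    · intro t
      rw [(hgD t).deriv]
      have := hsemi (x + t • h) h
      linarith
  obtain ⟨c, hc, hceq⟩ := exists_hasDerivAt_eq_slope (fun t : ℝ => V (x + t • h))
    (fun t : ℝ => fderiv ℝ V (x + t • h) h) one_pos
    (Continuous.continuousOn (by
      exact hdV.continuous.comp (by continuity)))
    (fun t _ => hD t)
  have hxy1 : x + (1:ℝ) • h = y := by rw [one_smul, hh]; abel
  have hxy0 : x + (0:ℝ) • h = x := by rw [zero_smul, add_zero]
  rw [hxy1, hxy0] at hceq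
  simp only [sub_zero, div_one] at hceq
  have hgc : fderiv ℝ V (x + (0:ℝ) • h) h + θ * ‖h‖ ^ 2 * 0
      ≤ fderiv ℝ V (x + c • h) h + θ * ‖h‖ ^ 2 * c := hmono hc.1.le
  rw [hxy0] at hgc
  have hgrad : ⟪gradient V x, x - y⟫ = fderiv ℝ V x (x - y) :=
    InnerProductSpace.toDual_symm_apply
  have hlin : fderiv ℝ V x (x - y) = - fderiv ℝ V x h := by
    rw [hh, ← ContinuousLinearMap.map_neg]
    congr 1
    abel
  have hnorm : ‖x - y‖ = ‖h‖ := by rw [hh, norm_sub_rev]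
  have hgc' : fderiv ℝ V x h - θ * ‖h‖ ^ 2 * c ≤ fderiv ℝ V (x + c • h) h := by
    linarith
  have hθc : θ * ‖h‖ ^ 2 * c ≤ θ * ‖h‖ ^ 2 :=
    mul_le_of_le_one_right (mul_nonneg hθ (sq_nonneg ‖h‖)) hc.2.le
  rw [hgrad, hlin, hnorm]
  have : V y - V x = fderiv ℝ V (x + c • h) h := hceq.symm
  linarith

end Helpers

set_option maxHeartbeats 1000000 in
theorem implicit_euler_lyapunov_step {d : ℕ} (V : EuclideanSpace ℝ (Fin d) → ℝ)
    (θ γ κ β δ ε : ℝ) (hV : ContDiff ℝ (⊤ : ℕ∞) V) (hVpos : ∀ q, 0 ≤ V q)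
    (hθ : 0 < θ) (hγ : 0 < γ) (hκ : 0 < κ) (hβ : 0 < β) (hβ1 : β < 1)
    (hsemi : ∀ x h, -θ * ‖h‖ ^ 2 ≤ fderiv ℝ (fderiv ℝ V) x h h)
    (hB2 : ∀ q, β * V q + γ ^ 2 * (β * (2 - β) / (8 * (1 - β))) * ‖q‖ ^ 2 - κ
      ≤ (1 / 2) * ⟪gradient V q, q⟫)
    (hδ : 0 < δ) (hδ' : δ < γ * β / (4 * θ))
    (hε : 0 < ε) (hε1 : ε < 1) (hδε : δ < ε * γ * β / (4 * θ))
    (Γδ : EuclideanSpace ℝ (Fin d) × EuclideanSpace ℝ (Fin d) → ℝ)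
    (hΓδ : ∀ q p, Γδ (q, p) = (1 / 2) * ‖p‖ ^ 2 + V q + (γ / 2) * ⟪q, p⟫
      + (γ ^ 2 / 4) * ‖q‖ ^ 2 + 1 + (γ * δ / 4) * ‖p‖ ^ 2)
    (qn qn1 pn pn1 w : EuclideanSpace ℝ (Fin d))
    (hstepq : qn1 = qn + δ • pn1)
    (hstepp : pn1 + δ • gradient V qn1 + (γ * δ) • pn1 = pn + w) :
    (1 + γ * (1 - ε) * δ * β) * Γδ (qn1, pn1)
      ≤ Γδ (qn, pn1 + (δ * γ) • pn1 + δ • gradient V qn1) + γ * δ * (κ + β) := by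
  have hqn : qn = qn1 - δ • pn1 := by rw [hstepq]; abel
  set g : EuclideanSpace ℝ (Fin d) := gradient V qn1 with hgdef
  -- scalar abbreviations
  have hθδ' : θ * δ ≤ ε * γ * β / 4 := by
    have h1 : θ * δ < θ * (ε * γ * β / (4 * θ)) := mul_lt_mul_of_pos_left hδε hθ
    have h2 : θ * (ε * γ * β / (4 * θ)) = ε * γ * β / 4 := by
      field_simp
    linarith
  -- semiconvexity bound
  have hdiff : qn1 - qn = δ • pn1 := by rw [hstepq]; abel
  have hconv0 := semiconvex_taylor V θ hθ.le hV hsemi qn1 qn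
  rw [hdiff] at hconv0
  have hconv : V qn1 - V (qn1 - δ • pn1) ≤ δ * ⟪g, pn1⟫ + θ * δ^2 * ‖pn1‖^2 := by
    rw [← hqn]
    have e1 : ⟪g, δ • pn1⟫ = δ * ⟪g, pn1⟫ := real_inner_smul_right g pn1 δ
    have e2 : ‖δ • pn1‖^2 = δ^2 * ‖pn1‖^2 := by
      rw [norm_smul, mul_pow, Real.norm_eq_abs, sq_abs]
    rw [e1, e2] at hconv0
    linarith [hconv0]
  -- Cauchy-Schwarz
  have hCS : ⟪qn1, pn1⟫^2 ≤ ‖pn1‖^2 * ‖qn1‖^2 := by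
    have h1 := real_inner_mul_inner_self_le qn1 pn1
    rw [real_inner_self_eq_norm_sq, real_inner_self_eq_norm_sq] at h1
    nlinarith [h1]
  -- square expansion
  have hsqe : 0 ≤ ‖g‖^2 + 2*γ*⟪g, pn1⟫ + γ^2*‖pn1‖^2 := by
    have h1 : 0 ≤ ‖g + γ • pn1‖^2 := sq_nonneg _
    have h2 : ‖g + γ • pn1‖^2 = ‖g‖^2 + 2*γ*⟪g, pn1⟫ + γ^2*‖pn1‖^2 := by
      rw [← real_inner_self_eq_norm_sq]
      simp only [inner_add_left, inner_add_right, real_inner_smul_left, real_inner_smul_right,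
        real_inner_self_eq_norm_sq]
      rw [real_inner_comm pn1 g]
      simp only [norm_smul, Real.norm_eq_abs, mul_pow, sq_abs]
      ring
    linarith [h1, h2]
  have core := core_ineq (‖pn1‖^2) (‖qn1‖^2) ⟪qn1, pn1⟫ ⟪g, pn1⟫ ⟪g, qn1⟫ (‖g‖^2)
    (V qn1) (V (qn1 - δ • pn1)) θ γ κ β δ ε
    (by positivity) (by positivity) (hVpos _) hCS hsqe hconv
    (by have := hB2 qn1; rw [← hgdef] at this; linarith) hθ hγ hδ hβ hβ1 hε hε1 hθδ'
  -- expansions of the new point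
  have hP2 : ‖pn1 + (δ * γ) • pn1 + δ • g‖^2
      = (1+δ*γ)^2*‖pn1‖^2 + 2*(1+δ*γ)*δ*⟪g, pn1⟫ + δ^2*‖g‖^2 := by
    rw [← real_inner_self_eq_norm_sq]
    simp only [inner_add_left, inner_add_right, real_inner_smul_left, real_inner_smul_right,
      real_inner_self_eq_norm_sq]
    rw [real_inner_comm pn1 g]
    simp only [norm_smul, Real.norm_eq_abs, mul_pow, sq_abs]
    ring
  have hqnP : ⟪qn1 - δ • pn1, pn1 + (δ * γ) • pn1 + δ • g⟫
      = (1+δ*γ)*⟪qn1, pn1⟫ + δ*⟪g, qn1⟫ - δ*(1+δ*γ)*‖pn1‖^2 - δ^2*⟪g, pn1⟫ := by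
    simp only [inner_add_right, inner_sub_left, real_inner_smul_left, real_inner_smul_right,
      real_inner_self_eq_norm_sq]
    rw [real_inner_comm qn1 g, real_inner_comm pn1 g]
    ring
  have hqn2 : ‖qn1 - δ • pn1‖^2 = ‖qn1‖^2 - 2*δ*⟪qn1, pn1⟫ + δ^2*‖pn1‖^2 := by
    rw [← real_inner_self_eq_norm_sq]
    simp only [inner_sub_left, inner_sub_right, real_inner_smul_left, real_inner_smul_right,
      real_inner_self_eq_norm_sq]
    rw [real_inner_comm pn1 qn1]
    simp only [norm_smul, Real.norm_eq_abs, mul_pow, sq_abs]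
    ring
  rw [hΓδ, hΓδ, hqn, hP2, hqnP, hqn2]
  linarith [core]
end
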